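/- arXiv:2408.01821 — 5 statements merged into one kernel-verified Lean document; each statement's English description precedes it below -/
import Mathlib

section
/- Let 0 < c < d and ℓ = (d - c)/d. Define F on the closed right half-plane {z ∈ ℂ : Re z ≥ 0} piecewise by: F(z) = (4z + iℓ(z - conj z)²)/(4 + 2iℓ(z - conj z)) on G₁ = {x + iy : 0 ≤ y ≤ 1, 0 ≤ x ≤ d(1 - ℓy)}; F(z) = z - (i(d - c)/2)(z - conj z) on G₂ = {x + iy : 0 ≤ y ≤ 1, x ≥ d(1 - ℓy)}; F(z) = ((2 - ℓ)z + ℓ·conj z)/(2(1 - ℓ)) on G₃ = {x + iy : y ≥ 1, 0 ≤ x ≤ c}; F(z) = z + (d - c) on G₄ = {x + iy : y ≥ 1, x ≥ c}; F(z) = z on G₅ = {x + iy : y ≤ 0, x ≥ 0}. Then the five formulas agree pairwise on the intersections of the closures of these regions, so F is a well-defined continuous function on {z : Re z ≥ 0}. -/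
open Complex ComplexConjugate

/-- The five formulas defining the piecewise map `f₁` of the paper. -/
noncomputable def pieceFormula (ℓ c d : ℝ) : Fin 5 → ℂ → ℂ
  | 0 => fun z => (4 * z + I * (ℓ : ℂ) * (z - conj z) ^ 2) /
      (4 + 2 * I * (ℓ : ℂ) * (z - conj z))
  | 1 => fun z => z - (I * ((d : ℂ) - (c : ℂ)) / 2) * (z - conj z)
  | 2 => fun z => ((2 - (ℓ : ℂ)) * z + (ℓ : ℂ) * conj z) / (2 * (1 - (ℓ : ℂ)))
  | 3 => fun z => z + ((d : ℂ) - (c : ℂ))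
  | 4 => fun z => z

/-- The five closed regions `G₁, …, G₅` covering the closed right half-plane. -/
def pieceRegion (ℓ c d : ℝ) : Fin 5 → Set ℂ
  | 0 => {z : ℂ | 0 ≤ z.im ∧ z.im ≤ 1 ∧ 0 ≤ z.re ∧ z.re ≤ d * (1 - ℓ * z.im)}
  | 1 => {z : ℂ | 0 ≤ z.im ∧ z.im ≤ 1 ∧ d * (1 - ℓ * z.im) ≤ z.re}
  | 2 => {z : ℂ | 1 ≤ z.im ∧ 0 ≤ z.re ∧ z.re ≤ c}
  | 3 => {z : ℂ | 1 ≤ z.im ∧ c ≤ z.re}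
  | 4 => {z : ℂ | z.im ≤ 0 ∧ 0 ≤ z.re}

/-- Clamp of `y` to `[0,1]`. -/
noncomputable def clmp (y : ℝ) : ℝ := min (max y 0) 1

lemma clmp_nonneg (y : ℝ) : 0 ≤ clmp y := le_min (le_max_right _ _) zero_le_one

lemma clmp_le_one (y : ℝ) : clmp y ≤ 1 := min_le_right _ _

lemma continuous_clmp : Continuous clmp :=
  (continuous_id.max continuous_const).min continuous_const

/-- The real part of the glued map. -/
noncomputable def myU (ℓ d : ℝ) (z : ℂ) : ℝ :=
  if z.re ≤ d * (1 - ℓ * clmp z.im) then z.re / (1 - ℓ * clmp z.im)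
  else z.re + d * ℓ * clmp z.im

/-- The glued map. -/
noncomputable def myF (ℓ d : ℝ) (z : ℂ) : ℂ := (myU ℓ d z : ℂ) + z.im * I

/-- The five formulas agree pairwise on the intersections of the (closed) regions,
hence they paste together to a well-defined continuous map `F` of the closed right
half-plane. -/
theorem stmt_4 (c d : ℝ) (hc : 0 < c) (hcd : c < d) (ℓ : ℝ) (hℓ : ℓ = (d - c) / d) :
    (∀ i j : Fin 5, ∀ z : ℂ, z ∈ pieceRegion ℓ c d i → z ∈ pieceRegion ℓ c d j →
      pieceFormula ℓ c d i z = pieceFormula ℓ c d j z) ∧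
    ∃ F : ℂ → ℂ, ContinuousOn F {z : ℂ | 0 ≤ z.re} ∧
      ∀ i : Fin 5, ∀ z ∈ pieceRegion ℓ c d i, F z = pieceFormula ℓ c d i z := by
  have hd : 0 < d := hc.trans hcd
  have hℓ0 : 0 ≤ ℓ := by rw [hℓ]; exact div_nonneg (by linarith) hd.le
  have hℓ1 : ℓ < 1 := by rw [hℓ, div_lt_one hd]; linarith
  have hdℓ : d * ℓ = d - c := by rw [hℓ]; field_simp
  have hdℓc : (d : ℂ) * ℓ = (d : ℂ) - c := by exact_mod_cast hdℓ
  have hden : ∀ y : ℝ, 0 ≤ y → y ≤ 1 → 0 < 1 - ℓ * y := fun y h0 h1 => by nlinarith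
  have hdenC : ∀ y : ℝ, 0 ≤ y → y ≤ 1 → ((1 : ℂ) - ℓ * y) ≠ 0 := by
    intro y h0 h1 hh
    have h2 : ((1 - ℓ * y : ℝ) : ℂ) = 0 := by push_cast; linear_combination hh
    exact (hden y h0 h1).ne' (by exact_mod_cast h2)
  -- value of myU on the right branch
  have hUr : ∀ z : ℂ, d * (1 - ℓ * clmp z.im) ≤ z.re →
      myU ℓ d z = z.re + d * ℓ * clmp z.im := by
    intro z hge
    unfold myU
    split_ifs with h
    · have hx : z.re = d * (1 - ℓ * clmp z.im) := le_antisymm h hge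
      have hp := hden (clmp z.im) (clmp_nonneg _) (clmp_le_one _)
      rw [hx]; field_simp; ring
    · rfl
  -- the key lemma: myF agrees with every formula on its region
  have key : ∀ i : Fin 5, ∀ z ∈ pieceRegion ℓ c d i, myF ℓ d z = pieceFormula ℓ c d i z := by
    intro i z hz
    fin_cases i
    · -- region 0
      obtain ⟨hy0, hy1, hx0, hx1⟩ := hz
      have hc1 : clmp z.im = z.im := by unfold clmp; rw [max_eq_left hy0, min_eq_left hy1]
      have hne : ((1:ℂ) - ℓ * z.im) ≠ 0 := hdenC z.im hy0 hy1
      simp only [myF, myU, pieceFormula, hc1, if_pos hx1]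
      have hD : (4 + 2 * I * (ℓ : ℂ) * (z - conj z)) = 4 * ((1:ℂ) - ℓ * z.im) := by
        rw [Complex.sub_conj]
        push_cast
        linear_combination (4*(ℓ:ℂ)*z.im) * Complex.I_sq
      rw [hD, eq_div_iff (by simp [hne])]
      rw [Complex.sub_conj]
      push_cast
      rw [show (4:ℂ)*z = 4*((z.re:ℂ) + z.im*I) by rw [re_add_im]]
      linear_combination 4*(div_mul_cancel₀ (z.re:ℂ) hne) +
        (-4*(ℓ:ℂ)*(z.im:ℂ)^2*I) * Complex.I_sq
    · -- region 1
      obtain ⟨hy0, hy1, hx1⟩ := hz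
      have hc1 : clmp z.im = z.im := by unfold clmp; rw [max_eq_left hy0, min_eq_left hy1]
      simp only [myF, pieceFormula, hUr z (by rw [hc1]; exact hx1), hc1]
      push_cast
      linear_combination (norm := (push_cast; ring1)) (re_add_im z) + (z.im:ℂ)*hdℓc +
        ((d:ℂ)-c)*(z.im:ℂ)*Complex.I_sq +
        (I*((d:ℂ)-c)/2)*(Complex.sub_conj z)
    · -- region 2
      obtain ⟨hy1, hx0, hxc⟩ := hz
      have hc1 : clmp z.im = 1 := by
        unfold clmp; rw [max_eq_left (by linarith), min_eq_right hy1]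
      have hcond : z.re ≤ d * (1 - ℓ * clmp z.im) := by
        rw [hc1]; nlinarith
      have hne : ((1:ℂ) - ℓ * (1:ℝ)) ≠ 0 := hdenC 1 zero_le_one le_rfl
      have hne' : ((1:ℂ) - (ℓ:ℂ)) ≠ 0 := by
        intro hh; exact hne (by push_cast; linear_combination hh)
      have hcond' : z.re ≤ d * (1 - ℓ) := by nlinarith
      simp only [myF, myU, pieceFormula, hc1, mul_one]
      rw [if_pos hcond', eq_div_iff (by simp [hne'])]
      push_cast
      linear_combination (norm := (push_cast; ring1))
        2*(div_mul_cancel₀ (z.re:ℂ) hne') +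
        2*(re_add_im z) + (ℓ:ℂ)*(Complex.sub_conj z)
    · -- region 3
      obtain ⟨hy1, hxc⟩ := hz
      have hc1 : clmp z.im = 1 := by
        unfold clmp; rw [max_eq_left (by linarith), min_eq_right hy1]
      have hge : d * (1 - ℓ * clmp z.im) ≤ z.re := by rw [hc1]; nlinarith
      simp only [myF, pieceFormula, hUr z hge, hc1]
      push_cast
      linear_combination (re_add_im z) + hdℓc
    · -- region 4
      obtain ⟨hy0, hx0⟩ := hz
      have hc1 : clmp z.im = 0 := by
        unfold clmp; rw [max_eq_right hy0, min_eq_left zero_le_one]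
      have hval : myU ℓ d z = z.re := by
        unfold myU
        rw [hc1]
        split_ifs <;> simp
      simp only [myF, pieceFormula, hval]
      exact re_add_im z
  refine ⟨fun i j z hi hj => (key i z hi).symm.trans (key j z hj), myF ℓ d, ?_, key⟩
  apply Continuous.continuousOn
  have h1 : Continuous fun z : ℂ => 1 - ℓ * clmp z.im :=
    continuous_const.sub (continuous_const.mul (continuous_clmp.comp continuous_im))
  have hU : Continuous (myU ℓ d) := by
    unfold myU
    exact Continuous.if_le
      (continuous_re.div h1 fun z => (hden _ (clmp_nonneg _) (clmp_le_one _)).ne')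
      (continuous_re.add (continuous_const.mul (continuous_clmp.comp continuous_im)))
      continuous_re (continuous_const.mul h1)
      (fun z h => by
        have hp := hden (clmp z.im) (clmp_nonneg _) (clmp_le_one _)
        rw [h]; field_simp; ring)
  exact (continuous_ofReal.comp hU).add
    ((continuous_ofReal.comp continuous_im).mul continuous_const)
end

section
/- Let d > 0, 0 < ℓ < 1, y ∈ [0, 1], and 0 ≤ x ≤ d(1 - ℓy). Then ((ℓy)²(1 - ℓy)² + (ℓx)²) / ((2 - ℓy)²(1 - ℓy)² + (ℓx)²) ≤ ((ℓy)² + (ℓd)²) / ((2 - ℓy)² + (ℓd)²). -/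
/-- For `0 ≤ x ≤ d(1 - ℓy)` and `y ∈ [0, 1]`, the squared Beltrami coefficient modulus
is at most its value at the slanted side `x = d(1 - ℓy)`. -/
theorem stmt_9 (d ℓ x y : ℝ) (hd : 0 < d) (hℓ0 : 0 < ℓ) (hℓ1 : ℓ < 1)
    (hy : y ∈ Set.Icc (0 : ℝ) 1) (hx0 : 0 ≤ x) (hx : x ≤ d * (1 - ℓ * y)) :
    ((ℓ * y) ^ 2 * (1 - ℓ * y) ^ 2 + (ℓ * x) ^ 2) /
        ((2 - ℓ * y) ^ 2 * (1 - ℓ * y) ^ 2 + (ℓ * x) ^ 2) ≤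
      ((ℓ * y) ^ 2 + (ℓ * d) ^ 2) / ((2 - ℓ * y) ^ 2 + (ℓ * d) ^ 2) := by
  obtain ⟨hy0, hy1⟩ := hy
  have hly : ℓ * y < 1 := lt_of_le_of_lt (by nlinarith) hℓ1
  have hly0 : 0 ≤ ℓ * y := by positivity
  have hc : 0 < 1 - ℓ * y := by linarith
  have hb : 0 < 2 - ℓ * y := by linarith
  have hD1 : 0 < (2 - ℓ * y) ^ 2 * (1 - ℓ * y) ^ 2 + (ℓ * x) ^ 2 := by positivity
  have hD2 : 0 < (2 - ℓ * y) ^ 2 + (ℓ * d) ^ 2 := by positivity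
  rw [div_le_div_iff₀ hD1 hD2]
  have hx2 : x ^ 2 ≤ (d * (1 - ℓ * y)) ^ 2 := by nlinarith
  nlinarith [mul_nonneg (mul_nonneg (sq_nonneg ℓ) (sub_nonneg.2 hx2))
      (by nlinarith : (0:ℝ) ≤ (2 - ℓ * y) ^ 2 - (ℓ * y) ^ 2), sq_nonneg ℓ]
end

section
/- Let d > 0, 0 < ℓ < 1, y ∈ [0, 1], and 0 ≤ x ≤ d(1 - ℓy). Then ((ℓy)²(1 - ℓy)² + (ℓx)²) / ((2 - ℓy)²(1 - ℓy)² + (ℓx)²) ≤ (1 + d²) / ((2/ℓ - 1)² + d²). -/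
/-!
With `t = ℓy`, `u = 1 - ℓy` and `s = ℓx`, the left side is `(t²u² + s²) / ((2 - t)²u² + s²)`.
As `t ≤ 2 - t`, this grows with `s²`, so it is largest at `s = ℓdu`, where `u²` cancels.
What remains, `(t² + ℓ²d²) / ((2 - t)² + ℓ²d²)`, grows with `t ∈ [0, 2)`, so it is largest at
`t = ℓ`; this is the right side multiplied by `ℓ²` above and below.
-/

theorem add_div_add_le_add_div_add {α : Type*} [Field α] [LinearOrder α] [IsStrictOrderedRing α]
    {a b p q : α} (hab : a ≤ b) (hpq : p ≤ q) (hbp : 0 < b + p) :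
    (a + p) / (b + p) ≤ (a + q) / (b + q) := by
  rw [div_le_div_iff₀ hbp (by linarith)]
  nlinarith [mul_nonneg (sub_nonneg.2 hab) (sub_nonneg.2 hpq)]

theorem monotoneOn_sq_add_div_two_sub_sq_add {α : Type*} [Field α] [LinearOrder α]
    [IsStrictOrderedRing α] {c : α} (hc : 0 ≤ c) :
    MonotoneOn (fun t : α => (t ^ 2 + c) / ((2 - t) ^ 2 + c)) (Set.Ico 0 2) := by
  intro s ⟨hs0, _⟩ t ⟨_, ht2⟩ hst
  have h2t : 0 < 2 - t := by linarith
  apply div_le_div₀ (by positivity) (by gcongr) (by positivity)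
  gcongr

theorem stmt_10_general (d ℓ x y : ℝ) (hℓ0 : 0 < ℓ) (hℓ1 : ℓ < 1)
    (hy : y ∈ Set.Icc (0 : ℝ) 1) (hx0 : 0 ≤ x) (hx : x ≤ d * (1 - ℓ * y)) :
    ((ℓ * y) ^ 2 * (1 - ℓ * y) ^ 2 + (ℓ * x) ^ 2) /
        ((2 - ℓ * y) ^ 2 * (1 - ℓ * y) ^ 2 + (ℓ * x) ^ 2) ≤
      (1 + d ^ 2) / ((2 / ℓ - 1) ^ 2 + d ^ 2) := by
  obtain ⟨hy0, hy1⟩ := hy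
  have hℓy : ℓ * y ≤ ℓ := mul_le_of_le_one_right hℓ0.le hy1
  have hu : 0 < 1 - ℓ * y := by linarith
  have h2 : 0 < 2 - ℓ * y := by linarith
  calc _ ≤ ((ℓ * y) ^ 2 * (1 - ℓ * y) ^ 2 + (ℓ * d) ^ 2 * (1 - ℓ * y) ^ 2) /
        ((2 - ℓ * y) ^ 2 * (1 - ℓ * y) ^ 2 + (ℓ * d) ^ 2 * (1 - ℓ * y) ^ 2) := by
        apply add_div_add_le_add_div_add
        · gcongr
          linarith
        · rw [← mul_pow, mul_assoc]
          gcongr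
        · positivity
    _ = ((ℓ * y) ^ 2 + (ℓ * d) ^ 2) / ((2 - ℓ * y) ^ 2 + (ℓ * d) ^ 2) := by
        rw [← add_mul, ← add_mul, mul_div_mul_right _ _ (by positivity)]
    _ ≤ (ℓ ^ 2 + (ℓ * d) ^ 2) / ((2 - ℓ) ^ 2 + (ℓ * d) ^ 2) :=
        monotoneOn_sq_add_div_two_sub_sq_add (sq_nonneg _) ⟨by positivity, by linarith⟩
          ⟨hℓ0.le, by linarith⟩ hℓy
    _ = (1 + d ^ 2) / ((2 / ℓ - 1) ^ 2 + d ^ 2) := by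
        field_simp

/-- For `0 ≤ x ≤ d(1 - ℓy)` and `y ∈ [0, 1]`, the squared Beltrami coefficient modulus
is at most `(1 + d²)/((2/ℓ - 1)² + d²)`. -/
theorem stmt_10 (d ℓ x y : ℝ) (hd : 0 < d) (hℓ0 : 0 < ℓ) (hℓ1 : ℓ < 1)
    (hy : y ∈ Set.Icc (0 : ℝ) 1) (hx0 : 0 ≤ x) (hx : x ≤ d * (1 - ℓ * y)) :
    ((ℓ * y) ^ 2 * (1 - ℓ * y) ^ 2 + (ℓ * x) ^ 2) /
        ((2 - ℓ * y) ^ 2 * (1 - ℓ * y) ^ 2 + (ℓ * x) ^ 2) ≤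
      (1 + d ^ 2) / ((2 / ℓ - 1) ^ 2 + d ^ 2) :=
  stmt_10_general d ℓ x y hℓ0 hℓ1 hy hx0 hx
end

section
/- Let d > 0 and 0 < ℓ < 1, and set K = (√((2 - ℓ)² + ℓ²d²) + ℓ√(1 + d²))² / (4(1 - ℓ)). For every (x, y) with 0 ≤ y ≤ 1 and 0 ≤ x ≤ d(1 - ℓy), the derivative matrix A = [[1/(1 - ℓy), ℓx/(1 - ℓy)²], [0, 1]] of the map φ(x, y) = (x/(1 - ℓy), y) satisfies ‖A‖² ≤ K · det A, where ‖A‖ is the operator norm of A acting on Euclidean ℝ². -/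
/-!
For `A = [[a, b], [0, 1]]` with `0 < a < K`, positive semidefiniteness of `K a · I - AᵀA` reduces
`‖A‖² ≤ K det A` to `(a² + b² + 1) / a ≤ K + 1 / K`. Here `t = 1 - ℓy`, `a = 1 / t` and
`b = ℓx / t²`; on the trapezoid `b² ≤ ℓ²d² / t²`, so the left side is at most
`(1 + ℓ²d²) / t + t`, which decreases on `[1 - ℓ, 1]`. The constant `K` is the root `> 1` of
`K + 1 / K = (1 + ℓ²d²) / (1 - ℓ) + (1 - ℓ)`: writing `K = (α + β)² / (4(1 - ℓ))` with
`α² - β² = 4(1 - ℓ)`, one has `1 / K = (α - β)² / (4(1 - ℓ))`.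
-/

theorem ContinuousLinearMap.opNorm_sq_le_of_forall_norm_sq_le {E F : Type*}
    [SeminormedAddCommGroup E] [SeminormedAddCommGroup F] [NormedSpace ℝ E] [NormedSpace ℝ F]
    (f : E →L[ℝ] F) {M : ℝ} (hM : 0 ≤ M) (h : ∀ v, ‖f v‖ ^ 2 ≤ M * ‖v‖ ^ 2) : ‖f‖ ^ 2 ≤ M := by
  have hf : ‖f‖ ≤ √M := f.opNorm_le_bound (Real.sqrt_nonneg M) fun v => by
    rw [← pow_le_pow_iff_left₀ (norm_nonneg _) (by positivity) two_ne_zero, mul_pow,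
      Real.sq_sqrt hM]
    exact h v
  simpa [Real.sq_sqrt hM] using pow_le_pow_left₀ (norm_nonneg f) hf 2

theorem norm_toEuclideanLin_upperTriangular_sq_le {a b K : ℝ} (ha : 0 < a) (haK : a < K)
    (h : K * (a ^ 2 + b ^ 2 + 1) ≤ a * (K ^ 2 + 1)) :
    ‖LinearMap.toContinuousLinearMap
        (Matrix.toEuclideanLin (!![a, b; 0, 1] : Matrix (Fin 2) (Fin 2) ℝ))‖ ^ 2 ≤ K * a := by
  refine ContinuousLinearMap.opNorm_sq_le_of_forall_norm_sq_le _
    (mul_nonneg (ha.trans haK).le ha.le) fun v => ?_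
  simp only [EuclideanSpace.real_norm_sq_eq, Fin.sum_univ_two,
    LinearMap.coe_toContinuousLinearMap', Matrix.toLpLin_apply, Matrix.cons_mulVec,
    Matrix.cons_dotProduct, Matrix.vecHead, Matrix.vecTail, Function.comp_apply,
    Fin.succ_zero_eq_one, Matrix.dotProduct_of_isEmpty, Matrix.empty_mulVec,
    Matrix.cons_val_zero, Matrix.cons_val_one, Matrix.cons_val_fin_one,
    add_zero, zero_mul, one_mul, zero_add]
  -- `p = a (K - a)` times the quadratic form is `(p v₀ - a b v₁)²` plus a nonnegative multiple of `v₁²`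
  have hp : 0 < a * (K - a) := mul_pos ha (sub_pos.2 haK)
  refine le_of_mul_le_mul_left ?_ hp
  nlinarith [sq_nonneg (a * (K - a) * v 0 - a * b * v 1),
    mul_nonneg (mul_nonneg ha.le (sub_nonneg.2 h)) (sq_nonneg (v 1))]

theorem div_add_le_div_add_of_mul_le {m s t : ℝ} (hs : 0 < s) (hst : s ≤ t) (hm : s * t ≤ m) :
    m / t + t ≤ m / s + s := by
  have ht : 0 < t := hs.trans_le hst
  rw [div_add' _ _ _ ht.ne', div_add' _ _ _ hs.ne', div_le_div_iff₀ ht hs]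
  nlinarith [mul_nonneg (sub_nonneg.2 hst) (sub_nonneg.2 hm)]

theorem two_mul_sq_add_one_of_sq_sub_sq {α β s : ℝ} (hs : s ≠ 0) (h : α ^ 2 - β ^ 2 = 4 * s) :
    2 * s * (((α + β) ^ 2 / (4 * s)) ^ 2 + 1) = (α + β) ^ 2 / (4 * s) * (α ^ 2 + β ^ 2) := by
  field_simp
  linear_combination -2 * (α ^ 2 - β ^ 2 + 4 * s) * h

noncomputable def dilatationBound (d ℓ : ℝ) : ℝ :=
  (√((2 - ℓ) ^ 2 + ℓ ^ 2 * d ^ 2) + ℓ * √(1 + d ^ 2)) ^ 2 / (4 * (1 - ℓ))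

theorem dilatationBound_sq_add_one {d ℓ : ℝ} (hℓ1 : ℓ < 1) :
    (1 - ℓ) * (dilatationBound d ℓ ^ 2 + 1) =
      dilatationBound d ℓ * (1 + ℓ ^ 2 * d ^ 2 + (1 - ℓ) ^ 2) := by
  have hα : √((2 - ℓ) ^ 2 + ℓ ^ 2 * d ^ 2) ^ 2 = (2 - ℓ) ^ 2 + ℓ ^ 2 * d ^ 2 :=
    Real.sq_sqrt (by positivity)
  have hβ : (ℓ * √(1 + d ^ 2)) ^ 2 = ℓ ^ 2 * (1 + d ^ 2) := by
    rw [mul_pow, Real.sq_sqrt (by positivity)]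
  have key := two_mul_sq_add_one_of_sq_sub_sq (s := 1 - ℓ) (by linarith)
    (by rw [hα, hβ]; ring :
      √((2 - ℓ) ^ 2 + ℓ ^ 2 * d ^ 2) ^ 2 - (ℓ * √(1 + d ^ 2)) ^ 2 = 4 * (1 - ℓ))
  rw [hα, hβ] at key
  unfold dilatationBound
  linear_combination key / 2

theorem one_lt_mul_dilatationBound {d ℓ : ℝ} (hd : 0 < d) (hℓ0 : 0 < ℓ) (hℓ1 : ℓ < 1) :
    1 < (1 - ℓ) * dilatationBound d ℓ := by
  have hα : 2 - ℓ < √((2 - ℓ) ^ 2 + ℓ ^ 2 * d ^ 2) :=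
    Real.lt_sqrt_of_sq_lt (by nlinarith [mul_pos (pow_pos hℓ0 2) (pow_pos hd 2)])
  have hβ : ℓ ≤ ℓ * √(1 + d ^ 2) :=
    le_mul_of_one_le_right hℓ0.le (Real.one_le_sqrt.2 (by nlinarith))
  have hK : (1 - ℓ) * dilatationBound d ℓ =
      (√((2 - ℓ) ^ 2 + ℓ ^ 2 * d ^ 2) + ℓ * √(1 + d ^ 2)) ^ 2 / 4 := by
    unfold dilatationBound
    field_simp [(by linarith : 1 - ℓ ≠ 0)]
  rw [hK]
  nlinarith

/-- On the trapezoid `G₁`, the derivative matrix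
`A = [[1/(1 - ℓy), ℓx/(1 - ℓy)²], [0, 1]]` of `φ(x, y) = (x/(1 - ℓy), y)`
satisfies `‖A‖² ≤ K · det A`, where `‖A‖` is the operator norm of `A` on
Euclidean `ℝ²` and `K = (√((2 - ℓ)² + ℓ²d²) + ℓ√(1 + d²))²/(4(1 - ℓ))`. -/
theorem stmt_13 (d ℓ x y : ℝ) (hd : 0 < d) (hℓ0 : 0 < ℓ) (hℓ1 : ℓ < 1)
    (hy0 : 0 ≤ y) (hy1 : y ≤ 1) (hx0 : 0 ≤ x) (hx : x ≤ d * (1 - ℓ * y)) :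
    ‖LinearMap.toContinuousLinearMap
        (Matrix.toEuclideanLin
          (!![1 / (1 - ℓ * y), ℓ * x / (1 - ℓ * y) ^ 2; 0, 1] :
            Matrix (Fin 2) (Fin 2) ℝ))‖ ^ 2 ≤
      ((Real.sqrt ((2 - ℓ) ^ 2 + ℓ ^ 2 * d ^ 2) + ℓ * Real.sqrt (1 + d ^ 2)) ^ 2 /
          (4 * (1 - ℓ))) *
        (!![1 / (1 - ℓ * y), ℓ * x / (1 - ℓ * y) ^ 2; 0, 1] :
          Matrix (Fin 2) (Fin 2) ℝ).det := by
  change _ ≤ dilatationBound d ℓ * _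
  set K := dilatationBound d ℓ
  set t := 1 - ℓ * y
  have hs : 0 < 1 - ℓ := by linarith
  have hst : 1 - ℓ ≤ t := by nlinarith
  have ht : 0 < t := hs.trans_le hst
  have hK : 1 < (1 - ℓ) * K := one_lt_mul_dilatationBound hd hℓ0 hℓ1
  have hK0 : 0 < K := pos_of_mul_pos_right (one_pos.trans hK) hs.le
  have hb : ℓ * x / t ^ 2 ≤ ℓ * d / t := by
    rw [div_le_div_iff₀ (by positivity) ht]
    nlinarith [mul_le_mul_of_nonneg_left hx (mul_nonneg hℓ0.le ht.le)]
  have hm : (1 - ℓ) * t ≤ 1 + ℓ ^ 2 * d ^ 2 := by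
    nlinarith [mul_nonneg hℓ0.le hy0, sq_nonneg (ℓ * d)]
  rw [Matrix.det_fin_two_of, mul_one, mul_zero, sub_zero]
  refine norm_toEuclideanLin_upperTriangular_sq_le (by positivity) ?_ ?_
  · rw [div_lt_iff₀ ht]
    nlinarith
  calc K * ((1 / t) ^ 2 + (ℓ * x / t ^ 2) ^ 2 + 1)
      ≤ K * ((1 / t) ^ 2 + (ℓ * d / t) ^ 2 + 1) := by gcongr
    _ = K / t * ((1 + ℓ ^ 2 * d ^ 2) / t + t) := by field_simp
    _ ≤ K / t * ((1 + ℓ ^ 2 * d ^ 2) / (1 - ℓ) + (1 - ℓ)) := by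
        gcongr K / t * ?_
        exact div_add_le_div_add_of_mul_le hs hst hm
    _ = 1 / t * (K ^ 2 + 1) := by
        field_simp
        linear_combination -dilatationBound_sq_add_one hℓ1
end

section
/- Let d > 0 and 0 < ℓ < 1. Then ℓd/√(4 + (ℓd)²) ≤ ℓ√(1 + d²)/√((2 - ℓ)² + (ℓd)²); equivalently, d²((2 - ℓ)² + ℓ²d²) ≤ (1 + d²)(4 + ℓ²d²). Consequently (√((2 - ℓ)² + ℓ²d²) + ℓ√(1 + d²))²/(4(1 - ℓ)) ≥ (ℓd + √((ℓd)² + 4))²/4, i.e. the dilatation majorant on the trapezoid G₁ dominates the dilatation majorant on the shear region G₂. -/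
/-- For `d > 0`, `0 < ℓ < 1`: the Beltrami coefficient modulus of the shear on `G₂`
is at most the Beltrami bound on the trapezoid `G₁`; equivalently
`d²((2 - ℓ)² + ℓ²d²) ≤ (1 + d²)(4 + ℓ²d²)`; consequently the dilatation majorant on
`G₁` dominates the dilatation majorant on `G₂`. -/
theorem stmt_15 (d ℓ : ℝ) (hd : 0 < d) (hℓ0 : 0 < ℓ) (hℓ1 : ℓ < 1) :
    ℓ * d / Real.sqrt (4 + (ℓ * d) ^ 2) ≤
      ℓ * Real.sqrt (1 + d ^ 2) / Real.sqrt ((2 - ℓ) ^ 2 + (ℓ * d) ^ 2) ∧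
    d ^ 2 * ((2 - ℓ) ^ 2 + ℓ ^ 2 * d ^ 2) ≤ (1 + d ^ 2) * (4 + ℓ ^ 2 * d ^ 2) ∧
    (ℓ * d + Real.sqrt ((ℓ * d) ^ 2 + 4)) ^ 2 / 4 ≤
      (Real.sqrt ((2 - ℓ) ^ 2 + ℓ ^ 2 * d ^ 2) + ℓ * Real.sqrt (1 + d ^ 2)) ^ 2 /
        (4 * (1 - ℓ)) := by
  set s : ℝ := ℓ * d with hs
  have hspos : 0 < s := mul_pos hℓ0 hd
  have h4s : (0:ℝ) < 4 + s ^ 2 := by positivity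
  have hA0 : (0:ℝ) < (2 - ℓ) ^ 2 + ℓ ^ 2 * d ^ 2 := by nlinarith
  have hB0 : (0:ℝ) < 1 + d ^ 2 := by positivity
  set t : ℝ := Real.sqrt (4 + s ^ 2) with ht
  set A : ℝ := Real.sqrt ((2 - ℓ) ^ 2 + ℓ ^ 2 * d ^ 2) with hA
  set B : ℝ := ℓ * Real.sqrt (1 + d ^ 2) with hB
  have htpos : 0 < t := Real.sqrt_pos.mpr h4s
  have hApos : 0 < A := Real.sqrt_pos.mpr hA0
  have hBpos : 0 < B := mul_pos hℓ0 (Real.sqrt_pos.mpr hB0)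
  have ht2 : t ^ 2 = 4 + s ^ 2 := Real.sq_sqrt h4s.le
  have hA2 : A ^ 2 = (2 - ℓ) ^ 2 + ℓ ^ 2 * d ^ 2 := Real.sq_sqrt hA0.le
  have hB2 : B ^ 2 = ℓ ^ 2 * (1 + d ^ 2) := by
    rw [hB, mul_pow, Real.sq_sqrt hB0.le]
  clear_value s t A B
  have key2 : d ^ 2 * ((2 - ℓ) ^ 2 + ℓ ^ 2 * d ^ 2) ≤ (1 + d ^ 2) * (4 + ℓ ^ 2 * d ^ 2) := by
    nlinarith [sq_nonneg d, sq_nonneg ℓ, mul_pos hℓ0 (mul_pos hd hd)]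
  have hsq : (s * A) ^ 2 ≤ (t * B) ^ 2 := by
    have h := mul_le_mul_of_nonneg_left key2 (sq_nonneg ℓ)
    have e : (s * A) ^ 2 = ℓ ^ 2 * (d ^ 2 * ((2 - ℓ) ^ 2 + ℓ ^ 2 * d ^ 2)) := by
      rw [mul_pow, hA2, hs]; ring
    have e' : (t * B) ^ 2 = ℓ ^ 2 * ((1 + d ^ 2) * (4 + ℓ ^ 2 * d ^ 2)) := by
      rw [mul_pow, ht2, hB2, hs]; ring
    rw [e, e']; exact h
  have hkey : s * A ≤ t * B := by
    nlinarith [mul_pos hspos hApos, mul_pos htpos hBpos]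
  have h1 : s / t ≤ B / A := by
    rw [div_le_div_iff₀ htpos hApos]; linarith
  have hAB : B < A := by
    nlinarith [hA2, hB2]
  have hts : s < t := by
    nlinarith [ht2]
  refine ⟨?_, key2, ?_⟩
  · have e2 : ((2:ℝ) - ℓ) ^ 2 + s ^ 2 = (2 - ℓ) ^ 2 + ℓ ^ 2 * d ^ 2 := by rw [hs]; ring
    rw [e2, ← hA]
    exact h1
  · have e3 : (s:ℝ) ^ 2 + 4 = 4 + s ^ 2 := by ring
    rw [e3, ← ht]
    rw [div_le_div_iff₀ (by norm_num) (by nlinarith : (0:ℝ) < 4 * (1 - ℓ))]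
    have h4l : 4 * (1 - ℓ) = A ^ 2 - B ^ 2 := by rw [hA2, hB2]; ring
    rw [h4l]
    have h5 : (s + t) * (A - B) ≤ (t - s) * (A + B) := by linarith [hkey]
    have hF : (0:ℝ) ≤ (s + t) * (A + B) := by positivity
    calc (s + t) ^ 2 * (A ^ 2 - B ^ 2)
        = ((s + t) * (A + B)) * ((s + t) * (A - B)) := by ring
      _ ≤ ((s + t) * (A + B)) * ((t - s) * (A + B)) := mul_le_mul_of_nonneg_left h5 hF
      _ = (A + B) ^ 2 * (t ^ 2 - s ^ 2) := by ring
      _ = (A + B) ^ 2 * 4 := by rw [ht2]; ring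
end
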